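/- arXiv:2401.02242 — 2 statements merged into one kernel-verified Lean document; each statement's English description precedes it below -/
import Mathlib

section
/- Let ρ : [0,∞) → [0,∞) be a smooth function satisfying ρ(t) = c·e^{-t} for t ∈ [0,R], supp ρ ⊆ [0, R+2], and 0 ≤ ρ''(t) ≤ c·e^{-R} for t ∈ [R, R+2], where c > 0 and R ≥ 1. Then |ρ(t) + ρ'(t)| ≤ 2c·e^{-R} · χ_{[R,R+2]}(t) for all t ≥ 0; in particular |ρ(t)+ρ'(t)| ≤ 20·e^{-R/2}·ρ(t/2) for all t ≥ 0. -/
open Real Set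

/-- For the cutoff heat-kernel mollifier `ρ` (equal to `c·e^{-t}` on `[0,R]`,
supported in `[0,R+2]`, with `0 ≤ ρ'' ≤ c·e^{-R}` on the transition region `[R,R+2]`),
one has `|ρ(t) + ρ'(t)| ≤ 2c·e^{-R}·χ_{[R,R+2]}(t)` and in particular
`|ρ(t)+ρ'(t)| ≤ 20·e^{-R/2}·ρ(t/2)` for all `t ≥ 0`. -/
theorem stmt0 (ρ : ℝ → ℝ) (c R : ℝ) (hc : 0 < c) (hR : 1 ≤ R)
    (hsmooth : ContDiff ℝ (⊤ : ℕ∞) ρ)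
    (hnonneg : ∀ t, 0 ≤ ρ t)
    (hgauss : ∀ t ∈ Set.Icc (0:ℝ) R, ρ t = c * Real.exp (-t))
    (hsupp : ∀ t, R + 2 < t → ρ t = 0)
    (hconv : ∀ t ∈ Set.Icc R (R + 2),
      0 ≤ deriv (deriv ρ) t ∧ deriv (deriv ρ) t ≤ c * Real.exp (-R)) :
    ∀ t : ℝ, 0 ≤ t →
      |ρ t + deriv ρ t| ≤
        2 * c * Real.exp (-R) * (Set.Icc R (R + 2)).indicator (fun _ => (1:ℝ)) t ∧
      |ρ t + deriv ρ t| ≤ 20 * Real.exp (-R / 2) * ρ (t / 2) := by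
  have hRpos : (0:ℝ) < R := by linarith
  have hdiff : Differentiable ℝ ρ := hsmooth.differentiable (by simp)
  have hderivCD : ContDiff ℝ (⊤ : ℕ∞) (deriv ρ) := (contDiff_infty_iff_deriv.mp hsmooth).2
  have hderivdiff : Differentiable ℝ (deriv ρ) := hderivCD.differentiable (by simp)
  -- derivative of the Gaussian model
  have hgd : ∀ x : ℝ, HasDerivAt (fun s : ℝ => c * Real.exp (-s)) (-(c * Real.exp (-x))) x := by
    intro x
    have h1 : HasDerivAt (fun s : ℝ => -s) (-1) x := (hasDerivAt_id x).neg
    have h2 := (Real.hasDerivAt_exp (-x)).comp x h1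
    have h3 : HasDerivAt (fun s : ℝ => c * Real.exp (-s)) (c * (Real.exp (-x) * -1)) x :=
      h2.const_mul c
    convert h3 using 1
    ring
  -- deriv ρ = -c e^{-t} on [0,R]
  have hA : ∀ t ∈ Icc (0:ℝ) R, deriv ρ t = -(c * Real.exp (-t)) := by
    intro t ht
    have hud : UniqueDiffWithinAt ℝ (Icc (0:ℝ) R) t := (uniqueDiffOn_Icc hRpos) t ht
    have e1 : derivWithin ρ (Icc 0 R) t = deriv ρ t := (hdiff t).derivWithin hud
    have e2 : derivWithin (fun s : ℝ => c * Real.exp (-s)) (Icc 0 R) t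
        = deriv (fun s : ℝ => c * Real.exp (-s)) t :=
      ((hgd t).differentiableAt).derivWithin hud
    have e3 : derivWithin ρ (Icc 0 R) t
        = derivWithin (fun s : ℝ => c * Real.exp (-s)) (Icc 0 R) t :=
      derivWithin_congr (fun x hx => hgauss x hx) (hgauss t ht)
    rw [← e1, e3, e2, (hgd t).deriv]
  -- ρ (R+2) = 0
  have hend : ρ (R + 2) = 0 := by
    have h1 : Filter.Tendsto ρ (nhdsWithin (R + 2) (Ioi (R + 2))) (nhds (ρ (R + 2))) :=
      (hdiff.continuous.tendsto (R + 2)).mono_left nhdsWithin_le_nhds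
    have h2 : Filter.Tendsto ρ (nhdsWithin (R + 2) (Ioi (R + 2))) (nhds 0) := by
      apply Filter.Tendsto.congr' _ tendsto_const_nhds
      filter_upwards [self_mem_nhdsWithin] with s hs
      exact (hsupp s hs).symm
    exact tendsto_nhds_unique h1 h2
  -- deriv ρ (R+2) = 0
  have hdend : deriv ρ (R + 2) = 0 := by
    have hmin : IsLocalMin ρ (R + 2) :=
      Filter.Eventually.of_forall (fun y => by rw [hend]; exact hnonneg y)
    exact hmin.deriv_eq_zero
  -- deriv ρ monotone on [R, R+2]
  have hmono : MonotoneOn (deriv ρ) (Icc R (R + 2)) := by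
    apply monotoneOn_of_deriv_nonneg (convex_Icc _ _) hderivdiff.continuous.continuousOn
      hderivdiff.differentiableOn
    intro x hx
    rw [interior_Icc] at hx
    exact (hconv x ⟨hx.1.le, hx.2.le⟩).1
  have hRmem : R ∈ Icc R (R + 2) := ⟨le_refl _, by linarith⟩
  have hR2mem : R + 2 ∈ Icc R (R + 2) := ⟨by linarith, le_refl _⟩
  have hdnonpos : ∀ t ∈ Icc R (R + 2), deriv ρ t ≤ 0 := by
    intro t ht
    have := hmono ht hR2mem ht.2
    rwa [hdend] at this
  have hdRval : deriv ρ R = -(c * Real.exp (-R)) := hA R ⟨hRpos.le, le_refl _⟩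
  have hdlb : ∀ t ∈ Icc R (R + 2), -(c * Real.exp (-R)) ≤ deriv ρ t := by
    intro t ht
    have := hmono hRmem ht ht.1
    rwa [hdRval] at this
  -- ρ antitone on [R, R+2]
  have hanti : AntitoneOn ρ (Icc R (R + 2)) := by
    apply antitoneOn_of_deriv_nonpos (convex_Icc _ _) hdiff.continuous.continuousOn
      hdiff.differentiableOn
    intro x hx
    rw [interior_Icc] at hx
    exact hdnonpos x ⟨hx.1.le, hx.2.le⟩
  have hρR : ρ R = c * Real.exp (-R) := hgauss R ⟨hRpos.le, le_refl _⟩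
  have hub : ∀ t ∈ Icc R (R + 2), ρ t ≤ c * Real.exp (-R) := by
    intro t ht
    have := hanti hRmem ht ht.1
    rwa [hρR] at this
  have hexpRpos : (0:ℝ) < Real.exp (-R) := Real.exp_pos _
  have hexpR2pos : (0:ℝ) < Real.exp (-R / 2) := Real.exp_pos _
  intro t ht0
  rcases le_or_gt t R with hcase | hcase
  · -- t ≤ R : ρ t + deriv ρ t = 0
    have hz : ρ t + deriv ρ t = 0 := by
      rw [hgauss t ⟨ht0, hcase⟩, hA t ⟨ht0, hcase⟩]; ring
    rw [hz, abs_zero]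
    constructor
    · apply mul_nonneg
      · positivity
      · exact Set.indicator_nonneg (fun _ _ => zero_le_one) t
    · have := hnonneg (t / 2)
      positivity
  rcases le_or_gt t (R + 2) with hcase2 | hcase2
  swap
  · -- t > R + 2
    have hz : ρ t = 0 := hsupp t hcase2
    have hdz : deriv ρ t = 0 := by
      have hev : ρ =ᶠ[nhds t] (fun _ => (0:ℝ)) := by
        filter_upwards [Ioi_mem_nhds hcase2] with s hs
        exact hsupp s hs
      rw [hev.deriv_eq, deriv_const]
    rw [hz, hdz, add_zero, abs_zero]
    constructor
    · apply mul_nonneg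
      · positivity
      · exact Set.indicator_nonneg (fun _ _ => zero_le_one) t
    · have := hnonneg (t / 2)
      positivity
  -- R < t ≤ R + 2
  have htmem : t ∈ Icc R (R + 2) := ⟨hcase.le, hcase2⟩
  have hub' := hub t htmem
  have hdnp := hdnonpos t htmem
  have hdlb' := hdlb t htmem
  have hρt := hnonneg t
  have habs : |ρ t + deriv ρ t| ≤ c * Real.exp (-R) :=
    abs_le.mpr ⟨by linarith, by linarith⟩
  constructor
  · rw [Set.indicator_of_mem htmem]
    calc |ρ t + deriv ρ t| ≤ c * Real.exp (-R) := habs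
    _ ≤ 2 * c * Real.exp (-R) * 1 := by nlinarith
  · rcases le_or_gt (t / 2) R with hhalf | hhalf
    · -- t/2 ≤ R : ρ(t/2) = c e^{-t/2}
      have hρhalf : ρ (t / 2) = c * Real.exp (-(t / 2)) :=
        hgauss (t / 2) ⟨by linarith, hhalf⟩
      rw [hρhalf]
      have hlow : Real.exp (-R / 2) * Real.exp (-1) ≤ Real.exp (-(t / 2)) := by
        rw [← Real.exp_add]
        apply Real.exp_le_exp.mpr
        linarith
      have heq : Real.exp (-R) = Real.exp (-R / 2) * Real.exp (-R / 2) := by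
        rw [← Real.exp_add]; ring_nf
      have he1 : (1:ℝ) / 3 ≤ Real.exp (-1) := by
        rw [Real.exp_neg]
        rw [div_le_iff₀ (by norm_num : (0:ℝ) < 3)]
        rw [inv_mul_eq_div, le_div_iff₀ (Real.exp_pos 1)]
        nlinarith [Real.exp_one_lt_d9]
      calc |ρ t + deriv ρ t| ≤ c * Real.exp (-R) := habs
      _ ≤ 20 * Real.exp (-R / 2) * (c * Real.exp (-(t / 2))) := by
          nlinarith [mul_le_mul_of_nonneg_left hlow
              (by positivity : (0:ℝ) ≤ 20 * Real.exp (-R / 2) * c),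
            mul_le_mul_of_nonneg_left he1
              (by positivity : (0:ℝ) ≤ 20 * c * (Real.exp (-R / 2) * Real.exp (-R / 2))),
            mul_pos (mul_pos hc hexpR2pos) hexpR2pos]
    · -- R < t/2 : use MVT on [t/2, t] and convexity
      have htpos : (0:ℝ) < t := by linarith
      have hab : t / 2 < t := by linarith
      have hhalfmem : t / 2 ∈ Icc R (R + 2) := ⟨hhalf.le, by linarith⟩
      obtain ⟨ξ, hξmem, hξ⟩ := exists_deriv_eq_slope ρ hab
        hdiff.continuous.continuousOn hdiff.differentiableOn
      have hξIcc : ξ ∈ Icc R (R + 2) := ⟨by linarith [hξmem.1], by linarith [hξmem.2]⟩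
      have hmleq : deriv ρ ξ ≤ deriv ρ t := hmono hξIcc htmem hξmem.2.le
      have hslope : (ρ t - ρ (t / 2)) / (t - t / 2) ≤ deriv ρ t := by
        rw [← hξ]; exact hmleq
      have htsub : t - t / 2 = t / 2 := by ring
      have hlb2 : ρ t - ρ (t / 2) ≤ (t / 2) * deriv ρ t := by
        have hpos : (0:ℝ) < t / 2 := by linarith
        rw [htsub] at hslope
        calc ρ t - ρ (t / 2) = (ρ t - ρ (t / 2)) / (t / 2) * (t / 2) := by
              field_simp
        _ ≤ deriv ρ t * (t / 2) := by
              apply mul_le_mul_of_nonneg_right hslope hpos.le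
        _ = (t / 2) * deriv ρ t := by ring
      -- t/2 ≥ R > 1 won't hold (R ≥ 1): t/2 > R ≥ 1
      have ht2ge1 : (1:ℝ) ≤ t / 2 := by linarith
      have hkey : (t / 2) * deriv ρ t ≤ deriv ρ t := by
        nlinarith
      have hmain : |ρ t + deriv ρ t| ≤ ρ (t / 2) :=
        abs_le.mpr ⟨by linarith, by linarith⟩
      -- R < 2 here, so 20 e^{-R/2} ≥ 20 e^{-1} ≥ 1
      have hRlt2 : R < 2 := by linarith
      have he1 : (1:ℝ) / 3 ≤ Real.exp (-1) := by
        rw [Real.exp_neg]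
        rw [div_le_iff₀ (by norm_num : (0:ℝ) < 3)]
        rw [inv_mul_eq_div, le_div_iff₀ (Real.exp_pos 1)]
        nlinarith [Real.exp_one_lt_d9]
      have hge : (1:ℝ) ≤ 20 * Real.exp (-R / 2) := by
        have : Real.exp (-1) ≤ Real.exp (-R / 2) := Real.exp_le_exp.mpr (by linarith)
        linarith
      have hρhp := hnonneg (t / 2)
      calc |ρ t + deriv ρ t| ≤ ρ (t / 2) := hmain
      _ = 1 * ρ (t / 2) := (one_mul _).symm
      _ ≤ 20 * Real.exp (-R / 2) * ρ (t / 2) := by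
          apply mul_le_mul_of_nonneg_right hge hρhp
end

section
/- Let {x_i}_{i=0}^k ⊂ B_r(0) ⊂ ℝ^n be α-linearly independent at scale r, meaning x_{i+1} ∉ B_{αr}(x₀ + span{x₁-x₀,…,x_i-x₀}) for each i. Then for every point q in the affine span x₀ + span{x₁-x₀,…,x_k-x₀} with |q - x₀| ≤ 2r, there exists a unique tuple (q₁,…,q_k) of reals with q = x₀ + Σ_{i=1}^k q_i (x_i - x₀) and |q_i| ≤ C(n,α)·|q-x₀|/r for all i. -/
open Real

lemma coeff_bound {E : Type*} [NormedAddCommGroup E] [NormedSpace ℝ E]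
    (α r : ℝ) (hα : 0 < α) (hr : 0 < r) :
    ∀ (m : ℕ) (v : Fin m → E), (∀ j, ‖v j‖ ≤ 2 * r) →
    (∀ j : Fin m, ∀ w ∈ Submodule.span ℝ (v '' {l | l < j}), α * r ≤ ‖v j - w‖) →
    ∀ c : Fin m → ℝ, ∀ i : Fin m,
      |c i| ≤ (1 / (α * r)) * (1 + 2 / α) ^ m * ‖∑ j, c j • v j‖ := by
  intro m
  induction m with
  | zero => exact fun v _ _ c i => absurd i.2 (by simp)
  | succ m ih =>
    intro v hv H c i
    have hαr : 0 < α * r := mul_pos hα hr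
    set y := ∑ j, c j • v j with hy
    set t := c (Fin.last m) with ht
    set s := ∑ j : Fin m, c j.castSucc • v j.castSucc with hs
    have hdecomp : y = s + t • v (Fin.last m) := by
      rw [hy, Fin.sum_univ_castSucc]
    have hsmem : s ∈ Submodule.span ℝ (v '' {l | l < Fin.last m}) := by
      apply Submodule.sum_mem
      intro j _
      exact Submodule.smul_mem _ _ (Submodule.subset_span
        ⟨j.castSucc, Fin.castSucc_lt_last j, rfl⟩)
    have key : |t| * (α * r) ≤ ‖y‖ := by
      rcases eq_or_ne t 0 with h0 | h0
      · simp [h0, norm_nonneg]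
      · have hw : (-(1 / t)) • s ∈ Submodule.span ℝ (v '' {l | l < Fin.last m}) :=
          Submodule.smul_mem _ _ hsmem
        have := H (Fin.last m) _ hw
        have heq : ‖v (Fin.last m) - (-(1 / t)) • s‖ = (1 / |t|) * ‖y‖ := by
          rw [hdecomp]
          rw [show v (Fin.last m) - (-(1 / t)) • s = (1 / t) • (s + t • v (Fin.last m)) by
            rw [smul_add, smul_smul, one_div, inv_mul_cancel₀ h0, one_smul, neg_smul,
              sub_neg_eq_add, add_comm]]
          rw [norm_smul, norm_div, norm_one, Real.norm_eq_abs]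
        rw [heq] at this
        have habs : 0 < |t| := abs_pos.mpr h0
        calc |t| * (α * r) ≤ |t| * ((1 / |t|) * ‖y‖) :=
              mul_le_mul_of_nonneg_left this habs.le
          _ = ‖y‖ := by field_simp
    have htb : |t| ≤ ‖y‖ / (α * r) := (le_div_iff₀ hαr).mpr key
    have hpow1 : (1 : ℝ) ≤ (1 + 2 / α) ^ (m + 1) :=
      one_le_pow₀ (by nlinarith [div_nonneg (by norm_num : (0:ℝ) ≤ 2) hα.le])
    induction i using Fin.lastCases with
    | last =>
      calc |c (Fin.last m)| ≤ ‖y‖ / (α * r) := htb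
        _ = (1 / (α * r)) * 1 * ‖y‖ := by ring
        _ ≤ (1 / (α * r)) * (1 + 2 / α) ^ (m + 1) * ‖y‖ := by
            gcongr
    | cast i =>
      set v' : Fin m → E := fun j => v j.castSucc with hv'
      set c' : Fin m → ℝ := fun j => c j.castSucc with hc'
      have hv'b : ∀ j, ‖v' j‖ ≤ 2 * r := fun j => hv _
      have H' : ∀ j : Fin m, ∀ w ∈ Submodule.span ℝ (v' '' {l | l < j}),
          α * r ≤ ‖v' j - w‖ := by
        intro j w hw
        have hsub : v' '' {l | l < j} ⊆ v '' {l | l < j.castSucc} := by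
          rintro _ ⟨l, hl, rfl⟩
          exact ⟨l.castSucc, by simpa using hl, rfl⟩
        exact H j.castSucc w (Submodule.span_mono hsub hw)
      have hy' : ∑ j, c' j • v' j = s := rfl
      have := ih v' hv'b H' c' i
      rw [hy'] at this
      have hsb : ‖s‖ ≤ (1 + 2 / α) * ‖y‖ := by
        have h1 : ‖s‖ ≤ ‖y‖ + |t| * ‖v (Fin.last m)‖ := by
          have : s = y - t • v (Fin.last m) := by rw [hdecomp]; abel
          rw [this]
          calc ‖y - t • v (Fin.last m)‖ ≤ ‖y‖ + ‖t • v (Fin.last m)‖ := norm_sub_le _ _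
            _ = ‖y‖ + |t| * ‖v (Fin.last m)‖ := by rw [norm_smul, Real.norm_eq_abs]
        have h2 : |t| * ‖v (Fin.last m)‖ ≤ (‖y‖ / (α * r)) * (2 * r) :=
          mul_le_mul htb (hv _) (norm_nonneg _) (by positivity)
        have h3 : (‖y‖ / (α * r)) * (2 * r) = (2 / α) * ‖y‖ := by
          field_simp
        nlinarith [norm_nonneg y]
      calc |c' i| ≤ (1 / (α * r)) * (1 + 2 / α) ^ m * ‖s‖ := this
        _ ≤ (1 / (α * r)) * (1 + 2 / α) ^ m * ((1 + 2 / α) * ‖y‖) := by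
            apply mul_le_mul_of_nonneg_left hsb (by positivity)
        _ = (1 / (α * r)) * (1 + 2 / α) ^ (m + 1) * ‖y‖ := by ring


/-- Lemma 2.12 of the paper. If `{x_i}_{i=0}^k ⊂ B_r(0) ⊆ ℝ^n` is
`α`-linearly independent at scale `r` (i.e. `x_{i+1} ∉ B_{αr}(x₀ + span{x₁-x₀,…,x_i-x₀})`),
then every `q` in the affine span with `|q - x₀| ≤ 2r` has a unique representation
`q = x₀ + Σ q_i (x_i - x₀)` and its coefficients satisfy `|q_i| ≤ C(n,α)·|q-x₀|/r`. -/
theorem stmt5 (n k : ℕ) (α r : ℝ) (hα : 0 < α) (hα1 : α < 1) (hr : 0 < r) :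
    ∃ C : ℝ, 0 < C ∧
    ∀ x : Fin (k + 1) → EuclideanSpace ℝ (Fin n),
      (∀ i, ‖x i‖ < r) →
      (∀ j : Fin (k + 1), 1 ≤ (j : ℕ) →
        ∀ w ∈ Submodule.span ℝ {v : EuclideanSpace ℝ (Fin n) |
            ∃ l : Fin (k + 1), 1 ≤ (l : ℕ) ∧ (l : ℕ) < (j : ℕ) ∧ v = x l - x 0},
          α * r ≤ ‖x j - x 0 - w‖) →
      ∀ q : EuclideanSpace ℝ (Fin n),
        q - x 0 ∈ Submodule.span ℝ {v : EuclideanSpace ℝ (Fin n) |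
            ∃ l : Fin (k + 1), 1 ≤ (l : ℕ) ∧ v = x l - x 0} →
        ‖q - x 0‖ ≤ 2 * r →
        (∃! c : Fin k → ℝ, q = x 0 + ∑ i : Fin k, c i • (x i.succ - x 0)) ∧
        (∀ c : Fin k → ℝ, q = x 0 + ∑ i : Fin k, c i • (x i.succ - x 0) →
          ∀ i, |c i| ≤ C * ‖q - x 0‖ / r) := by
  refine ⟨(1 / α) * (1 + 2 / α) ^ k, by positivity, ?_⟩
  intro x hx h q hq hq2
  set v : Fin k → EuclideanSpace ℝ (Fin n) := fun i => x i.succ - x 0 with hv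
  -- norm bounds
  have hvb : ∀ j, ‖v j‖ ≤ 2 * r := by
    intro j
    calc ‖x j.succ - x 0‖ ≤ ‖x j.succ‖ + ‖x 0‖ := norm_sub_le _ _
      _ ≤ 2 * r := by linarith [hx j.succ, hx 0]
  -- distance hypothesis for v
  have H : ∀ j : Fin k, ∀ w ∈ Submodule.span ℝ (v '' {l | l < j}), α * r ≤ ‖v j - w‖ := by
    intro j w hw
    have hset : v '' {l | l < j} ⊆ {u : EuclideanSpace ℝ (Fin n) |
        ∃ l : Fin (k + 1), 1 ≤ (l : ℕ) ∧ (l : ℕ) < ((j.succ : Fin (k+1)) : ℕ) ∧ u = x l - x 0} := by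
      rintro _ ⟨l, hl, rfl⟩
      exact ⟨l.succ, by simp, by simpa [Fin.succ_lt_succ_iff] using hl, rfl⟩
    exact h j.succ (by simp) w (Submodule.span_mono hset hw)
  -- the set equals the range of v
  have hsetr : {u : EuclideanSpace ℝ (Fin n) | ∃ l : Fin (k + 1), 1 ≤ (l : ℕ) ∧ u = x l - x 0}
      = Set.range v := by
    ext u
    constructor
    · rintro ⟨l, hl, rfl⟩
      refine ⟨⟨(l : ℕ) - 1, by omega⟩, ?_⟩
      have : (⟨(l : ℕ) - 1, by omega⟩ : Fin k).succ = l := by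
        ext; simp; omega
      rw [hv]; simp only [this]
    · rintro ⟨i, rfl⟩
      exact ⟨i.succ, by simp, rfl⟩
  rw [hsetr] at hq
  obtain ⟨c₀, hc₀⟩ := (Submodule.mem_span_range_iff_exists_fun ℝ).mp hq
  have bound := coeff_bound α r hα hr k v hvb H
  have hrepr : ∀ c : Fin k → ℝ, q = x 0 + ∑ i : Fin k, c i • (x i.succ - x 0) →
      ∀ i, |c i| ≤ (1 / α) * (1 + 2 / α) ^ k * ‖q - x 0‖ / r := by
    intro c hc i
    have hsum : ∑ j, c j • v j = q - x 0 := by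
      rw [hc]; abel
    have := bound c i
    rw [hsum] at this
    calc |c i| ≤ (1 / (α * r)) * (1 + 2 / α) ^ k * ‖q - x 0‖ := this
      _ = (1 / α) * (1 + 2 / α) ^ k * ‖q - x 0‖ / r := by
          rw [← div_div]; ring
  refine ⟨⟨c₀, ?_, ?_⟩, hrepr⟩
  · show q = x 0 + ∑ i : Fin k, c₀ i • (x i.succ - x 0)
    exact sub_eq_iff_eq_add'.mp hc₀.symm
  · intro c hc
    funext i
    have hd : ∑ j, (c j - c₀ j) • v j = 0 := by
      have h1 : ∑ j, c j • v j = q - x 0 := by rw [hc]; abel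
      simp only [sub_smul, Finset.sum_sub_distrib, h1, hc₀, sub_self]
    have hb := bound (fun j => c j - c₀ j) i
    rw [hd, norm_zero, mul_zero] at hb
    have hzero : c i - c₀ i = 0 := by
      have := abs_nonpos_iff.mp hb
      simpa using this
    linarith
end
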